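/- arXiv:2005.12415 — 2 statements merged into one kernel-verified Lean document; each statement's English description precedes it below -/
import Mathlib

section
/- Let A be a real n₁ × n₂ matrix of rank r with reduced SVD A = U Σ Vᵀ, and let P_T(B) = U Uᵀ B + B V Vᵀ − U Uᵀ B V Vᵀ. Then for any real n₁ × n₂ matrix B, rank(P_T(B)) ≤ 2·rank(A). -/
open Matrix

noncomputable def singVals {m n : ℕ} (A : Matrix (Fin m) (Fin n) ℝ) : Fin n → ℝ :=
  fun i => Real.sqrt ((Matrix.isHermitian_conjTranspose_mul_self A).eigenvalues i)

noncomputable def nuclearNorm {m n : ℕ} (A : Matrix (Fin m) (Fin n) ℝ) : ℝ :=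
  ∑ i, singVals A i

noncomputable def frobNorm {m n : ℕ} (A : Matrix (Fin m) (Fin n) ℝ) : ℝ :=
  Real.sqrt (∑ i, ∑ j, (A i j) ^ 2)


/-- Projection onto the tangent space of the set of low-rank matrices at a
matrix with reduced SVD given by column-orthonormal `U` and `V`. -/
def PT {n₁ n₂ r : ℕ} (U : Matrix (Fin n₁) (Fin r) ℝ) (V : Matrix (Fin n₂) (Fin r) ℝ)
    (B : Matrix (Fin n₁) (Fin n₂) ℝ) : Matrix (Fin n₁) (Fin n₂) ℝ :=
  U * Uᵀ * B + B * (V * Vᵀ) - U * Uᵀ * B * (V * Vᵀ)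

/-!
`P_T B = U (Uᵀ B) + ((B - U Uᵀ B) V) Vᵀ`: the first summand factors through the `r` columns
of `U`, the second through the `r` columns of `V`, so each has rank at most `r`, and rank is
subadditive.
-/

theorem Matrix.rank_add_le {K m n : Type*} [Field K] [Finite m] [Fintype n]
    (X Y : Matrix m n K) : (X + Y).rank ≤ X.rank + Y.rank := by
  rw [Matrix.rank, Matrix.rank, Matrix.rank, mulVecLin_add]
  exact (Submodule.finrank_mono (LinearMap.range_add_le _ _)).trans
    (Submodule.finrank_add_le_finrank_add_finrank _ _)

theorem PT_eq_add {n₁ n₂ r : ℕ} (U : Matrix (Fin n₁) (Fin r) ℝ) (V : Matrix (Fin n₂) (Fin r) ℝ)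
    (B : Matrix (Fin n₁) (Fin n₂) ℝ) :
    PT U V B = U * (Uᵀ * B) + (B - U * Uᵀ * B) * V * Vᵀ := by
  simp only [PT, Matrix.sub_mul, Matrix.mul_assoc]
  abel

theorem rank_PT_le {n₁ n₂ r : ℕ} (U : Matrix (Fin n₁) (Fin r) ℝ) (V : Matrix (Fin n₂) (Fin r) ℝ)
    (B : Matrix (Fin n₁) (Fin n₂) ℝ) : (PT U V B).rank ≤ 2 * r := by
  rw [PT_eq_add, two_mul]
  refine (rank_add_le _ _).trans (add_le_add ?_ ?_)
  · exact (rank_mul_le_left _ _).trans (rank_le_width U)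
  · exact (rank_mul_le_right _ _).trans (rank_le_height Vᵀ)

theorem stmt12_general {n₁ n₂ r : ℕ} (A : Matrix (Fin n₁) (Fin n₂) ℝ)
    (U : Matrix (Fin n₁) (Fin r) ℝ) (V : Matrix (Fin n₂) (Fin r) ℝ)
    (hrank : A.rank = r)
    (B : Matrix (Fin n₁) (Fin n₂) ℝ) :
    (PT U V B).rank ≤ 2 * A.rank :=
  hrank ▸ rank_PT_le U V B

/-- `rank (P_T B) ≤ 2 rank A`. -/
theorem stmt12 {n₁ n₂ r : ℕ} (A : Matrix (Fin n₁) (Fin n₂) ℝ)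
    (U : Matrix (Fin n₁) (Fin r) ℝ) (V : Matrix (Fin n₂) (Fin r) ℝ)
    (σ : Fin r → ℝ) (hσ : ∀ i, 0 < σ i)
    (hU : Uᵀ * U = 1) (hV : Vᵀ * V = 1)
    (hA : A = U * Matrix.diagonal σ * Vᵀ) (hrank : A.rank = r)
    (B : Matrix (Fin n₁) (Fin n₂) ℝ) :
    (PT U V B).rank ≤ 2 * A.rank :=
  stmt12_general A U V hrank B
end

section
/- Let ℓ : ℝ^{n₁×n₂} → ℝ be convex and differentiable, let λ* > 0, λ_max ≥ 0, and let A, B be n₁ × n₂ matrices satisfying ℓ(A) + λ*·‖A‖_* + λ_max·‖A‖_max ≤ ℓ(B) + λ*·‖B‖_* + λ_max·‖B‖_max, and suppose λ* ≥ 2·‖∇ℓ(B)‖_op. Then ‖P_B^⊥(A − B)‖_* ≤ 3·‖P_B(A − B)‖_* + 2·(λ_max/λ*)·‖A − B‖_F, where P_B denotes the projection onto the tangent space of the reduced SVD of B and P_B^⊥ its complement. -/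
/-!
Convexity gives `⟨∇ℓ(B), A - B⟩ ≤ ℓ(A) - ℓ(B)`, and duality `⟨X, Y⟩ ≤ ‖X‖_op ‖Y‖_*` bounds the
left side below by `-(λ*/2) ‖A - B‖_*`. The nuclear norm is additive on pairs `X, Y` with
`Xᵀ Y = 0` and `X Yᵀ = 0`, because the sum of their polar parts `X (XᵀX)^{+1/2} + Y (YᵀY)^{+1/2}`
is a common dual certificate of spectral norm at most one. Since `B` and `P_B^⊥(A - B)` are such
a pair, this gives the decomposability inequality
`‖B‖_* - ‖A‖_* ≤ ‖P_B(A - B)‖_* - ‖P_B^⊥(A - B)‖_*`. Together with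
`‖B‖_max - ‖A‖_max ≤ ‖A - B‖_F`, the objective inequality then rearranges to the claim.
-/

open Matrix

noncomputable def maxRowNorm {m n : ℕ} (A : Matrix (Fin m) (Fin n) ℝ) : ℝ :=
  ⨆ i, Real.sqrt (∑ j, (A i j) ^ 2)

/-- The spectral (operator) norm: the largest singular value. -/
noncomputable def specNorm {m n : ℕ} (A : Matrix (Fin m) (Fin n) ℝ) : ℝ :=
  ⨆ i, singVals A i

attribute [local instance] Matrix.frobeniusNormedAddCommGroup Matrix.frobeniusNormedSpace

section OrthogonalConj

variable {n : ℕ} {Q : Matrix (Fin n) (Fin n) ℝ}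

lemma conj_diagonal_mul_conj_diagonal (hQ : Qᵀ * Q = 1) (a b : Fin n → ℝ) :
    Q * diagonal a * Qᵀ * (Q * diagonal b * Qᵀ) = Q * diagonal (a * b) * Qᵀ := by
  simp only [Matrix.mul_assoc]
  rw [← Matrix.mul_assoc Qᵀ, hQ, Matrix.one_mul, ← Matrix.mul_assoc (diagonal a),
    diagonal_mul_diagonal]
  rfl

lemma transpose_conj_diagonal (Q : Matrix (Fin n) (Fin n) ℝ) (a : Fin n → ℝ) :
    (Q * diagonal a * Qᵀ)ᵀ = Q * diagonal a * Qᵀ := by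
  simp [Matrix.transpose_mul, Matrix.mul_assoc]

lemma trace_conj_diagonal (hQ : Qᵀ * Q = 1) (a : Fin n → ℝ) :
    trace (Q * diagonal a * Qᵀ) = ∑ i, a i := by
  rw [trace_mul_cycle, hQ, Matrix.one_mul, trace_diagonal]

lemma transpose_mul_conj_diagonal_mul (hQ : Qᵀ * Q = 1) (a : Fin n → ℝ) :
    Qᵀ * (Q * diagonal a * Qᵀ) * Q = diagonal a := by
  simp only [Matrix.mul_assoc, hQ, Matrix.mul_one]
  rw [← Matrix.mul_assoc, hQ, Matrix.one_mul]

lemma dotProduct_conj_diagonal_mulVec (Q : Matrix (Fin n) (Fin n) ℝ) (a x : Fin n → ℝ) :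
    x ⬝ᵥ ((Q * diagonal a * Qᵀ) *ᵥ x) = ∑ i, a i * (Qᵀ *ᵥ x) i ^ 2 := by
  rw [← mulVec_mulVec, ← mulVec_mulVec, dotProduct_mulVec, ← mulVec_transpose]
  simp [dotProduct, mulVec_diagonal, sq, mul_left_comm]

lemma dotProduct_transpose_apply_self (hQ : Qᵀ * Q = 1) (i : Fin n) : Qᵀ i ⬝ᵥ Qᵀ i = 1 := by
  simpa [Matrix.mul_apply, dotProduct] using congrFun (congrFun hQ i) i

end OrthogonalConj

lemma dotProduct_le_sqrt_mul_sqrt {n : ℕ} (x y : Fin n → ℝ) :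
    x ⬝ᵥ y ≤ √(x ⬝ᵥ x) * √(y ⬝ᵥ y) := by
  simpa [dotProduct, sq] using Real.sum_mul_le_sqrt_mul_sqrt Finset.univ x y

lemma dotProduct_mulVec_self {m n : ℕ} (A : Matrix (Fin m) (Fin n) ℝ) (x : Fin n → ℝ) :
    (A *ᵥ x) ⬝ᵥ (A *ᵥ x) = x ⬝ᵥ ((Aᵀ * A) *ᵥ x) := by
  rw [← mulVec_mulVec, dotProduct_mulVec x, vecMul_transpose]

section Spectral

variable {m n : ℕ}

noncomputable def rightSingVecs (A : Matrix (Fin m) (Fin n) ℝ) : Matrix (Fin n) (Fin n) ℝ :=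
  (isHermitian_conjTranspose_mul_self A).eigenvectorUnitary

noncomputable def gramEigs (A : Matrix (Fin m) (Fin n) ℝ) : Fin n → ℝ :=
  (isHermitian_conjTranspose_mul_self A).eigenvalues

variable (A : Matrix (Fin m) (Fin n) ℝ)

lemma gramEigs_nonneg (i : Fin n) : 0 ≤ gramEigs A i :=
  eigenvalues_conjTranspose_mul_self_nonneg A i

lemma singVals_sq (i : Fin n) : singVals A i ^ 2 = gramEigs A i :=
  Real.sq_sqrt (gramEigs_nonneg A i)

lemma rightSingVecs_transpose_mul : (rightSingVecs A)ᵀ * rightSingVecs A = 1 := by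
  have h := Unitary.coe_star_mul_self (isHermitian_conjTranspose_mul_self A).eigenvectorUnitary
  rwa [star_eq_conjTranspose, conjTranspose_eq_transpose_of_trivial] at h

lemma rightSingVecs_mul_transpose : rightSingVecs A * (rightSingVecs A)ᵀ = 1 :=
  mul_eq_one_comm.mp (rightSingVecs_transpose_mul A)

lemma transpose_mul_self_eq_conj :
    Aᵀ * A = rightSingVecs A * diagonal (gramEigs A) * (rightSingVecs A)ᵀ := by
  have h := (isHermitian_conjTranspose_mul_self A).spectral_theorem
  simp only [Unitary.conjStarAlgAut_apply, star_eq_conjTranspose,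
    conjTranspose_eq_transpose_of_trivial, RCLike.ofReal_real_eq_id, Function.id_comp] at h
  exact h

lemma dotProduct_mulVec_rightSingVecs_self (i : Fin n) :
    (A *ᵥ (rightSingVecs A)ᵀ i) ⬝ᵥ (A *ᵥ (rightSingVecs A)ᵀ i) = gramEigs A i := by
  have h : (Aᵀ * A) *ᵥ (rightSingVecs A)ᵀ i = gramEigs A i • (rightSingVecs A)ᵀ i := by
    rw [← conjTranspose_eq_transpose_of_trivial]
    exact (isHermitian_conjTranspose_mul_self A).mulVec_eigenvectorBasis i
  rw [dotProduct_mulVec_self, h, dotProduct_smul,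
    dotProduct_transpose_apply_self (rightSingVecs_transpose_mul A), smul_eq_mul, mul_one]

lemma singVals_le_specNorm (i : Fin n) : singVals A i ≤ specNorm A :=
  le_ciSup (Set.finite_range _).bddAbove i

lemma specNorm_nonneg : 0 ≤ specNorm A :=
  Real.iSup_nonneg fun _ => Real.sqrt_nonneg _

lemma nuclearNorm_nonneg : 0 ≤ nuclearNorm A :=
  Finset.sum_nonneg fun _ _ => Real.sqrt_nonneg _

lemma nuclearNorm_neg : nuclearNorm (-A) = nuclearNorm A := by
  unfold nuclearNorm singVals
  congr! 3
  simp

lemma dotProduct_mulVec_self_le (x : Fin n → ℝ) :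
    (A *ᵥ x) ⬝ᵥ (A *ᵥ x) ≤ specNorm A ^ 2 * (x ⬝ᵥ x) := by
  have hQ := rightSingVecs_mul_transpose A
  have hx : x ⬝ᵥ x = ∑ i, ((rightSingVecs A)ᵀ *ᵥ x) i ^ 2 := by
    simpa [hQ] using dotProduct_conj_diagonal_mulVec (rightSingVecs A) 1 x
  rw [dotProduct_mulVec_self, transpose_mul_self_eq_conj, dotProduct_conj_diagonal_mulVec, hx,
    Finset.mul_sum]
  refine Finset.sum_le_sum fun i _ => mul_le_mul_of_nonneg_right ?_ (sq_nonneg _)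
  rw [← singVals_sq]
  exact pow_le_pow_left₀ (Real.sqrt_nonneg _) (singVals_le_specNorm A i) 2

end Spectral

section Duality

variable {m n : ℕ}

lemma trace_transpose_mul_eq_sum_sum (X Y : Matrix (Fin m) (Fin n) ℝ) :
    trace (Xᵀ * Y) = ∑ i, ∑ j, X i j * Y i j := by
  simp only [trace, diag_apply, Matrix.mul_apply, transpose_apply]
  exact Finset.sum_comm

lemma trace_transpose_mul_eq_sum_dotProduct (X Y : Matrix (Fin m) (Fin n) ℝ)
    {Q : Matrix (Fin n) (Fin n) ℝ} (hQ : Q * Qᵀ = 1) :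
    trace (Xᵀ * Y) = ∑ i, (X *ᵥ Qᵀ i) ⬝ᵥ (Y *ᵥ Qᵀ i) := by
  calc trace (Xᵀ * Y) = trace ((X * Q)ᵀ * (Y * Q)) := by
        rw [transpose_mul, Matrix.mul_assoc, trace_mul_comm Qᵀ]
        simp only [Matrix.mul_assoc, hQ, Matrix.mul_one]
    _ = ∑ i, (X *ᵥ Qᵀ i) ⬝ᵥ (Y *ᵥ Qᵀ i) := rfl

lemma trace_transpose_mul_le (X A : Matrix (Fin m) (Fin n) ℝ) :
    trace (Xᵀ * A) ≤ specNorm X * nuclearNorm A := by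
  have hQ := rightSingVecs_transpose_mul A
  set Q := rightSingVecs A
  rw [trace_transpose_mul_eq_sum_dotProduct X A (rightSingVecs_mul_transpose A), nuclearNorm,
    Finset.mul_sum]
  refine Finset.sum_le_sum fun i _ => (dotProduct_le_sqrt_mul_sqrt _ _).trans ?_
  rw [dotProduct_mulVec_rightSingVecs_self]
  refine mul_le_mul_of_nonneg_right ?_ (Real.sqrt_nonneg _)
  calc √((X *ᵥ Qᵀ i) ⬝ᵥ (X *ᵥ Qᵀ i))
      ≤ √(specNorm X ^ 2) := by
        refine Real.sqrt_le_sqrt ?_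
        simpa only [dotProduct_transpose_apply_self hQ, mul_one] using
          dotProduct_mulVec_self_le X (Qᵀ i)
    _ = specNorm X := Real.sqrt_sq (specNorm_nonneg X)

end Duality

section DualCertificate

variable {m n : ℕ}

/-- With `0⁻¹ = 0` this is the Moore–Penrose pseudo-inverse of `√(Aᵀ A)`. -/
noncomputable def gramInvSqrt (A : Matrix (Fin m) (Fin n) ℝ) : Matrix (Fin n) (Fin n) ℝ :=
  rightSingVecs A * diagonal (fun i => (√(gramEigs A i))⁻¹) * (rightSingVecs A)ᵀ

/-- The partial isometry `U Vᵀ` of a reduced SVD `A = U Σ Vᵀ`. -/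
noncomputable def polarPart (A : Matrix (Fin m) (Fin n) ℝ) : Matrix (Fin m) (Fin n) ℝ :=
  A * gramInvSqrt A

lemma specNorm_le_one_of_isIdempotentElem (W : Matrix (Fin m) (Fin n) ℝ)
    (h : IsIdempotentElem (Wᵀ * W)) : specNorm W ≤ 1 := by
  have hQ := rightSingVecs_transpose_mul W
  refine Real.iSup_le (fun i => ?_) zero_le_one
  have hdiag : diagonal (gramEigs W * gramEigs W) = diagonal (gramEigs W) := by
    have := congrArg (fun M => (rightSingVecs W)ᵀ * M * rightSingVecs W) h.eq
    simpa only [transpose_mul_self_eq_conj, conj_diagonal_mul_conj_diagonal hQ,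
      transpose_mul_conj_diagonal_mul hQ] using this
  have hμ := congrFun (diagonal_injective hdiag) i
  simp only [Pi.mul_apply] at hμ
  show √(gramEigs W i) ≤ 1
  rw [Real.sqrt_le_one]
  nlinarith [gramEigs_nonneg W i]

variable (A : Matrix (Fin m) (Fin n) ℝ)

lemma transpose_gramInvSqrt : (gramInvSqrt A)ᵀ = gramInvSqrt A :=
  transpose_conj_diagonal _ _

lemma commute_gramInvSqrt : Commute (gramInvSqrt A) (Aᵀ * A) := by
  have hQ := rightSingVecs_transpose_mul A
  rw [Commute, SemiconjBy, transpose_mul_self_eq_conj, gramInvSqrt,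
    conj_diagonal_mul_conj_diagonal hQ, conj_diagonal_mul_conj_diagonal hQ, mul_comm]

lemma trace_transpose_polarPart_mul : trace ((polarPart A)ᵀ * A) = nuclearNorm A := by
  have hQ := rightSingVecs_transpose_mul A
  rw [polarPart, transpose_mul, transpose_gramInvSqrt, Matrix.mul_assoc, gramInvSqrt,
    transpose_mul_self_eq_conj, conj_diagonal_mul_conj_diagonal hQ, trace_conj_diagonal hQ]
  refine Finset.sum_congr rfl fun i _ => ?_
  simp only [Pi.mul_apply, inv_mul_eq_div, Real.div_sqrt, singVals, gramEigs]

noncomputable def polarProj (A : Matrix (Fin m) (Fin n) ℝ) : Matrix (Fin n) (Fin n) ℝ :=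
  (polarPart A)ᵀ * polarPart A

lemma polarProj_eq : polarProj A = gramInvSqrt A * gramInvSqrt A * (Aᵀ * A) := by
  rw [polarProj, polarPart, transpose_mul, transpose_gramInvSqrt, Matrix.mul_assoc,
    ← Matrix.mul_assoc Aᵀ, ← (commute_gramInvSqrt A).eq, Matrix.mul_assoc]

lemma isIdempotentElem_polarProj : IsIdempotentElem (polarProj A) := by
  have hQ := rightSingVecs_transpose_mul A
  rw [polarProj_eq, gramInvSqrt, transpose_mul_self_eq_conj, conj_diagonal_mul_conj_diagonal hQ,
    conj_diagonal_mul_conj_diagonal hQ, IsIdempotentElem, conj_diagonal_mul_conj_diagonal hQ]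
  congr 3
  funext i
  rcases eq_or_ne (gramEigs A i) 0 with h | h
  · simp [h]
  · have hs : √(gramEigs A i) ≠ 0 := Real.sqrt_ne_zero'.mpr <| (gramEigs_nonneg A i).lt_of_ne' h
    simp only [Pi.mul_apply]
    field_simp
    rw [Real.sq_sqrt (gramEigs_nonneg A i)]

variable {A}

lemma transpose_polarPart_mul_eq_zero {B : Matrix (Fin m) (Fin n) ℝ} (h : Aᵀ * B = 0) :
    (polarPart A)ᵀ * B = 0 := by
  rw [polarPart, transpose_mul, Matrix.mul_assoc, h, Matrix.mul_zero]

lemma transpose_polarPart_mul_polarPart_eq_zero {B : Matrix (Fin m) (Fin n) ℝ}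
    (h : Aᵀ * B = 0) : (polarPart A)ᵀ * polarPart B = 0 := by
  change _ * (B * gramInvSqrt B) = 0
  rw [← Matrix.mul_assoc, transpose_polarPart_mul_eq_zero h, Matrix.zero_mul]

lemma polarProj_mul_polarProj_eq_zero {B : Matrix (Fin m) (Fin n) ℝ} (h : A * Bᵀ = 0) :
    polarProj A * polarProj B = 0 := by
  have hAB : Aᵀ * A * (Bᵀ * B) = 0 := by
    rw [Matrix.mul_assoc, ← Matrix.mul_assoc A, h, Matrix.zero_mul, Matrix.mul_zero]
  rw [polarProj_eq, polarProj_eq,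
    ((commute_gramInvSqrt B).mul_left (commute_gramInvSqrt B)).eq,
    show ∀ C D M N : Matrix (Fin n) (Fin n) ℝ, C * M * (N * D) = C * (M * N) * D by
      intro C D M N; simp only [Matrix.mul_assoc],
    hAB, Matrix.mul_zero, Matrix.zero_mul]

end DualCertificate

section NuclearNorm

variable {m n : ℕ}

lemma exists_dual_certificate_of_orthogonal {X Y : Matrix (Fin m) (Fin n) ℝ}
    (h₁ : Xᵀ * Y = 0) (h₂ : X * Yᵀ = 0) :
    ∃ W : Matrix (Fin m) (Fin n) ℝ,
      specNorm W ≤ 1 ∧ trace (Wᵀ * X) = nuclearNorm X ∧ trace (Wᵀ * Y) = nuclearNorm Y := by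
  have h₁' : Yᵀ * X = 0 := by simpa using congrArg transpose h₁
  have h₂' : Y * Xᵀ = 0 := by simpa using congrArg transpose h₂
  refine ⟨polarPart X + polarPart Y, specNorm_le_one_of_isIdempotentElem _ ?_, ?_, ?_⟩
  · have hWW : (polarPart X + polarPart Y)ᵀ * (polarPart X + polarPart Y) =
        polarProj X + polarProj Y := by
      rw [transpose_add, Matrix.add_mul, Matrix.mul_add, Matrix.mul_add,
        transpose_polarPart_mul_polarPart_eq_zero h₁,
        transpose_polarPart_mul_polarPart_eq_zero h₁', add_zero, zero_add]
      rfl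
    rw [hWW]
    refine (isIdempotentElem_polarProj X).add (isIdempotentElem_polarProj Y) ?_
    rw [polarProj_mul_polarProj_eq_zero h₂, polarProj_mul_polarProj_eq_zero h₂', add_zero]
  · rw [transpose_add, Matrix.add_mul, trace_add, trace_transpose_polarPart_mul,
      transpose_polarPart_mul_eq_zero h₁', trace_zero, add_zero]
  · rw [transpose_add, Matrix.add_mul, trace_add, trace_transpose_polarPart_mul,
      transpose_polarPart_mul_eq_zero h₁, trace_zero, zero_add]

lemma nuclearNorm_add_le (X Y : Matrix (Fin m) (Fin n) ℝ) :
    nuclearNorm (X + Y) ≤ nuclearNorm X + nuclearNorm Y := by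
  obtain ⟨W, hW, hWXY, -⟩ :=
    exists_dual_certificate_of_orthogonal (X := X + Y) (Y := 0) (by simp) (by simp)
  calc nuclearNorm (X + Y) = trace (Wᵀ * X) + trace (Wᵀ * Y) := by
        rw [← hWXY, Matrix.mul_add, trace_add]
    _ ≤ specNorm W * nuclearNorm X + specNorm W * nuclearNorm Y :=
        add_le_add (trace_transpose_mul_le W X) (trace_transpose_mul_le W Y)
    _ ≤ nuclearNorm X + nuclearNorm Y :=
        add_le_add (mul_le_of_le_one_left (nuclearNorm_nonneg X) hW)
          (mul_le_of_le_one_left (nuclearNorm_nonneg Y) hW)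

lemma nuclearNorm_add_of_orthogonal {X Y : Matrix (Fin m) (Fin n) ℝ}
    (h₁ : Xᵀ * Y = 0) (h₂ : X * Yᵀ = 0) :
    nuclearNorm (X + Y) = nuclearNorm X + nuclearNorm Y := by
  refine le_antisymm (nuclearNorm_add_le X Y) ?_
  obtain ⟨W, hW, hWX, hWY⟩ := exists_dual_certificate_of_orthogonal h₁ h₂
  calc nuclearNorm X + nuclearNorm Y = trace (Wᵀ * (X + Y)) := by
        rw [Matrix.mul_add, trace_add, hWX, hWY]
    _ ≤ specNorm W * nuclearNorm (X + Y) := trace_transpose_mul_le W (X + Y)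
    _ ≤ nuclearNorm (X + Y) := mul_le_of_le_one_left (nuclearNorm_nonneg _) hW

end NuclearNorm

lemma ConvexOn.fderiv_apply_sub_le {E : Type*} [NormedAddCommGroup E] [NormedSpace ℝ E]
    {f : E → ℝ} (hf : ConvexOn ℝ Set.univ f) {x : E} (hx : DifferentiableAt ℝ f x) (y : E) :
    fderiv ℝ f x (y - x) ≤ f y - f x := by
  set L : ℝ →ᵃ[ℝ] E := AffineMap.lineMap x y
  have hline : ConvexOn ℝ Set.univ (f ∘ L) := by simpa using hf.comp_affineMap L
  have hderiv : HasDerivAt (f ∘ L) (fderiv ℝ f x (y - x)) 0 := by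
    have hx' : HasFDerivAt f (fderiv ℝ f x) (L 0) := by simpa [L] using hx.hasFDerivAt
    exact hx'.comp_hasDerivAt 0 AffineMap.hasDerivAt_lineMap
  simpa [slope_def_field, L] using
    hline.le_slope_of_hasDerivAt (Set.mem_univ 0) (Set.mem_univ 1) one_pos hderiv

lemma maxRowNorm_sub_le_frobNorm {m n : ℕ} (A B : Matrix (Fin m) (Fin n) ℝ) :
    maxRowNorm B - maxRowNorm A ≤ frobNorm (A - B) := by
  rw [sub_le_iff_le_add']
  refine Real.iSup_le (fun i => ?_)
    (add_nonneg (Real.iSup_nonneg fun _ => Real.sqrt_nonneg _) (Real.sqrt_nonneg _))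
  calc √(∑ j, B i j ^ 2) ≤ √(∑ j, A i j ^ 2) + √(∑ j, (A - B) i j ^ 2) := by
        simpa [EuclideanSpace.norm_eq] using
          norm_sub_le (WithLp.toLp 2 (A i)) (WithLp.toLp 2 ((A - B) i))
    _ ≤ maxRowNorm A + frobNorm (A - B) := by
        refine add_le_add (le_ciSup (f := fun k => √(∑ j, A k j ^ 2))
          (Set.finite_range _).bddAbove i) (Real.sqrt_le_sqrt ?_)
        exact Finset.single_le_sum (fun k _ => Finset.sum_nonneg fun j _ => sq_nonneg _)
          (Finset.mem_univ i)

section TangentSpace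

variable {n₁ n₂ r : ℕ} {U : Matrix (Fin n₁) (Fin r) ℝ} {V : Matrix (Fin n₂) (Fin r) ℝ}

lemma sub_PT_eq (Δ : Matrix (Fin n₁) (Fin n₂) ℝ) : Δ - PT U V Δ = (1 - U * Uᵀ) * Δ * (1 - V * Vᵀ) := by
  simp only [PT, Matrix.sub_mul, Matrix.mul_sub, Matrix.one_mul, Matrix.mul_one]
  abel

lemma transpose_mul_one_sub_mul_transpose {k : ℕ} {W : Matrix (Fin k) (Fin r) ℝ}
    (hW : Wᵀ * W = 1) : Wᵀ * (1 - W * Wᵀ) = 0 := by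
  rw [Matrix.mul_sub, Matrix.mul_one, ← Matrix.mul_assoc, hW, Matrix.one_mul, sub_self]

lemma transpose_mul_sub_PT_eq_zero (hU : Uᵀ * U = 1) (S : Matrix (Fin r) (Fin r) ℝ)
    (Δ : Matrix (Fin n₁) (Fin n₂) ℝ) : (U * S * Vᵀ)ᵀ * (Δ - PT U V Δ) = 0 := by
  rw [sub_PT_eq, transpose_mul, transpose_mul]
  simp only [Matrix.mul_assoc]
  rw [← Matrix.mul_assoc Uᵀ, transpose_mul_one_sub_mul_transpose hU, Matrix.zero_mul,
    Matrix.mul_zero, Matrix.mul_zero]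

lemma mul_transpose_sub_PT_eq_zero (hV : Vᵀ * V = 1) (S : Matrix (Fin r) (Fin r) ℝ)
    (Δ : Matrix (Fin n₁) (Fin n₂) ℝ) : U * S * Vᵀ * (Δ - PT U V Δ)ᵀ = 0 := by
  rw [sub_PT_eq, transpose_mul, transpose_mul, transpose_sub (1 : Matrix _ _ ℝ), transpose_one,
    transpose_mul, transpose_transpose]
  simp only [Matrix.mul_assoc]
  rw [← Matrix.mul_assoc Vᵀ, transpose_mul_one_sub_mul_transpose hV, Matrix.zero_mul,
    Matrix.mul_zero, Matrix.mul_zero]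

lemma nuclearNorm_sub_nuclearNorm_le (hU : Uᵀ * U = 1) (hV : Vᵀ * V = 1)
    (S : Matrix (Fin r) (Fin r) ℝ) {A B : Matrix (Fin n₁) (Fin n₂) ℝ} (hB : B = U * S * Vᵀ) :
    nuclearNorm B - nuclearNorm A ≤
      nuclearNorm (PT U V (A - B)) - nuclearNorm ((A - B) - PT U V (A - B)) := by
  set P := PT U V (A - B)
  have hsplit : nuclearNorm (B + ((A - B) - P)) = nuclearNorm B + nuclearNorm ((A - B) - P) := by
    subst hB
    exact nuclearNorm_add_of_orthogonal (transpose_mul_sub_PT_eq_zero hU S _)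
      (mul_transpose_sub_PT_eq_zero hV S _)
  have htriangle : nuclearNorm (B + ((A - B) - P)) ≤ nuclearNorm A + nuclearNorm P :=
    calc nuclearNorm (B + ((A - B) - P)) = nuclearNorm (A + -P) := by congr 1; abel
      _ ≤ nuclearNorm A + nuclearNorm (-P) := nuclearNorm_add_le A (-P)
      _ = nuclearNorm A + nuclearNorm P := by rw [nuclearNorm_neg]
  linarith

end TangentSpace

theorem stmt19_general {n₁ n₂ r : ℕ}
    (ℓ : Matrix (Fin n₁) (Fin n₂) ℝ → ℝ)
    (hconv : ConvexOn ℝ Set.univ ℓ) (hdiff : Differentiable ℝ ℓ)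
    (A B : Matrix (Fin n₁) (Fin n₂) ℝ)
    (G : Matrix (Fin n₁) (Fin n₂) ℝ)
    (hG : ∀ M, fderiv ℝ ℓ B M = ∑ i, ∑ j, G i j * M i j)
    (lamS lamM : ℝ) (hlamS : 0 < lamS) (hlamM : 0 ≤ lamM)
    (U : Matrix (Fin n₁) (Fin r) ℝ) (V : Matrix (Fin n₂) (Fin r) ℝ)
    (σ : Fin r → ℝ)
    (hU : Uᵀ * U = 1) (hV : Vᵀ * V = 1)
    (hB : B = U * Matrix.diagonal σ * Vᵀ)
    (hobj : ℓ A + lamS * nuclearNorm A + lamM * maxRowNorm A ≤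
      ℓ B + lamS * nuclearNorm B + lamM * maxRowNorm B)
    (hgap : 2 * specNorm G ≤ lamS) :
    nuclearNorm ((A - B) - PT U V (A - B)) ≤
      3 * nuclearNorm (PT U V (A - B)) + 2 * (lamM / lamS) * frobNorm (A - B) := by
  set Δ := A - B
  set Nt := nuclearNorm (PT U V Δ)
  set Np := nuclearNorm (Δ - PT U V Δ)
  have hgrad : trace (Gᵀ * Δ) ≤ ℓ A - ℓ B := by
    rw [trace_transpose_mul_eq_sum_sum, ← hG]
    exact hconv.fderiv_apply_sub_le (hdiff B) A
  have hdual : -trace (Gᵀ * Δ) ≤ specNorm G * (Nt + Np) := by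
    calc -trace (Gᵀ * Δ) = trace (Gᵀ * -Δ) := by rw [Matrix.mul_neg, trace_neg]
      _ ≤ specNorm G * nuclearNorm Δ := by
        simpa only [nuclearNorm_neg] using trace_transpose_mul_le G (-Δ)
      _ ≤ specNorm G * (Nt + Np) := by
        refine mul_le_mul_of_nonneg_left ?_ (specNorm_nonneg G)
        simpa using nuclearNorm_add_le (PT U V Δ) (Δ - PT U V Δ)
  have hdecomp : nuclearNorm B - nuclearNorm A ≤ Nt - Np :=
    nuclearNorm_sub_nuclearNorm_le hU hV (diagonal σ) hB
  have hmax := maxRowNorm_sub_le_frobNorm A B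
  refine le_of_mul_le_mul_left ?_ hlamS
  calc lamS * Np ≤ lamS * (3 * Nt) + 2 * lamM * frobNorm Δ := by
        linarith [mul_le_mul_of_nonneg_left hdecomp hlamS.le,
          mul_le_mul_of_nonneg_left hmax hlamM, mul_le_mul_of_nonneg_right hgap
            (add_nonneg (nuclearNorm_nonneg (PT U V Δ)) (nuclearNorm_nonneg (Δ - PT U V Δ)))]
    _ = lamS * (3 * Nt + 2 * (lamM / lamS) * frobNorm Δ) := by field_simp

/-- Cone-type inequality for the regularized problem: if `A` improves the
penalized objective over `B` and `λ* ≥ 2‖∇ℓ(B)‖_op`, then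
`‖P_B^⊥(A−B)‖_* ≤ 3‖P_B(A−B)‖_* + 2(λmax/λ*)‖A−B‖_F`. -/
theorem stmt19 {n₁ n₂ r : ℕ}
    (ℓ : Matrix (Fin n₁) (Fin n₂) ℝ → ℝ)
    (hconv : ConvexOn ℝ Set.univ ℓ) (hdiff : Differentiable ℝ ℓ)
    (A B : Matrix (Fin n₁) (Fin n₂) ℝ)
    (G : Matrix (Fin n₁) (Fin n₂) ℝ)
    (hG : ∀ M, fderiv ℝ ℓ B M = ∑ i, ∑ j, G i j * M i j)
    (lamS lamM : ℝ) (hlamS : 0 < lamS) (hlamM : 0 ≤ lamM)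
    (U : Matrix (Fin n₁) (Fin r) ℝ) (V : Matrix (Fin n₂) (Fin r) ℝ)
    (σ : Fin r → ℝ) (hσ : ∀ i, 0 < σ i)
    (hU : Uᵀ * U = 1) (hV : Vᵀ * V = 1)
    (hB : B = U * Matrix.diagonal σ * Vᵀ)
    (hobj : ℓ A + lamS * nuclearNorm A + lamM * maxRowNorm A ≤
      ℓ B + lamS * nuclearNorm B + lamM * maxRowNorm B)
    (hgap : 2 * specNorm G ≤ lamS) :
    nuclearNorm ((A - B) - PT U V (A - B)) ≤
      3 * nuclearNorm (PT U V (A - B)) + 2 * (lamM / lamS) * frobNorm (A - B) :=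
  stmt19_general ℓ hconv hdiff A B G hG lamS lamM hlamS hlamM U V σ hU hV hB hobj hgap
end
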